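/- Let G be a connected graph of order n ≥ 4 with γ_R(G) = 3. Then b_R(G) = Δ(G) = n − 2 if and only if G is isomorphic to the cycle C_4. -/

import Mathlib

open SimpleGraph Finset

/-- A Roman dominating function: values in {0,1,2}, every 0-vertex has a neighbor with value 2. -/
def IsRDF {V : Type*} (G : SimpleGraph V) (f : V → ℕ) : Prop :=
  (∀ v, f v ≤ 2) ∧ ∀ v, f v = 0 → ∃ u, G.Adj v u ∧ f u = 2

/-- The Roman domination number: minimum weight of a Roman dominating function. -/
noncomputable def romanDom {V : Type*} [Fintype V] (G : SimpleGraph V) : ℕ :=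
  sInf {k | ∃ f : V → ℕ, IsRDF G f ∧ ∑ v, f v = k}

/-- A dominating set. -/
def IsDomSet {V : Type*} (G : SimpleGraph V) (S : Set V) : Prop :=
  ∀ v, v ∈ S ∨ ∃ u ∈ S, G.Adj u v

/-- The domination number. -/
noncomputable def domNum {V : Type*} [Fintype V] (G : SimpleGraph V) : ℕ :=
  sInf {k | ∃ S : Set V, IsDomSet G S ∧ S.ncard = k}

/-- Degree of a vertex. -/
noncomputable def deg {V : Type*} (G : SimpleGraph V) (v : V) : ℕ :=
  (G.neighborSet v).ncard

/-- Maximum degree. -/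
noncomputable def maxDeg {V : Type*} (G : SimpleGraph V) : ℕ :=
  sSup {d | ∃ v, deg G v = d}

/-- Minimum degree. -/
noncomputable def minDeg {V : Type*} (G : SimpleGraph V) : ℕ :=
  sInf {d | ∃ v, deg G v = d}

/-- The Roman bondage number: minimum size of an edge set whose deletion increases `romanDom`. -/
noncomputable def romanBondage {V : Type*} [Fintype V] (G : SimpleGraph V) : ℕ :=
  sInf {k | ∃ B : Set (Sym2 V), B ⊆ G.edgeSet ∧
    romanDom (G.deleteEdges B) > romanDom G ∧ B.ncard = k}

/-- The bondage number: minimum size of an edge set whose deletion increases `domNum`. -/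
noncomputable def bondage {V : Type*} [Fintype V] (G : SimpleGraph V) : ℕ :=
  sInf {k | ∃ B : Set (Sym2 V), B ⊆ G.edgeSet ∧
    domNum (G.deleteEdges B) > domNum G ∧ B.ncard = k}

/-- A vertex cover. -/
def IsVC {V : Type*} (G : SimpleGraph V) (S : Set V) : Prop :=
  ∀ u v, G.Adj u v → u ∈ S ∨ v ∈ S

/-- The vertex covering number. -/
noncomputable def vcNum {V : Type*} [Fintype V] (G : SimpleGraph V) : ℕ :=
  sInf {k | ∃ S : Set V, IsVC G S ∧ S.ncard = k}

/-!
Write `deg Gᶜ v` for the number of non-neighbours of `v`. The Roman dominating function with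
weight `2` on `v` and `1` on its non-neighbours gives `γ_R(G) ≤ 2 + deg Gᶜ v`, and for `n ≥ 4`
a minimum one of weight at most `3` has this shape; so `γ_R(G) = 3` means that no vertex is
universal and the vertices of degree `Δ = n - 2` are exactly those with one non-neighbour.
Deleting edges raises `γ_R` precisely when every such vertex loses an edge, so `b_R(G)` is the
least number of edges covering these vertices. Two of them are adjacent unless each is the
other's only non-neighbour, which gives a cover by about half as many edges and `b_R(G) ≤ n - 3`
for `n ≥ 5` (for `n = 5`, parity rules out all five vertices having degree `3`). For `n = 4` a
cover needs two edges only if every vertex has degree `2`, i.e. `G ≅ C₄`.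
-/

section Degree

variable {V : Type*}

lemma deg_eq_degree (G : SimpleGraph V) [Fintype V] [DecidableRel G.Adj] (v : V) :
    deg G v = G.degree v := by
  rw [deg, degree, neighborFinset_def, Set.ncard_eq_toFinset_card']

lemma deg_add_deg_compl [Fintype V] (G : SimpleGraph V) (v : V) :
    deg G v + deg Gᶜ v = Fintype.card V - 1 := by
  classical
  rw [deg_eq_degree, deg_eq_degree, degree_compl]
  have := G.degree_lt_card_verts v
  omega

lemma deg_mono [Finite V] {G H : SimpleGraph V} (h : G ≤ H) (v : V) : deg G v ≤ deg H v :=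
  Set.ncard_le_ncard (fun _ hu => h hu)

lemma deg_lt_deg [Finite V] {G H : SimpleGraph V} (h : G ≤ H) {v u : V} (hH : H.Adj v u)
    (hG : ¬G.Adj v u) : deg G v < deg H v :=
  Set.ncard_lt_ncard ⟨fun _ hw => h hw, fun hsub => hG (hsub hH)⟩

lemma deg_iso {W : Type*} {G : SimpleGraph V} {H : SimpleGraph W} (e : G ≃g H) (v : V) :
    deg G v = deg H (e v) := by
  rw [deg, deg, ← Nat.card_coe_set_eq, ← Nat.card_coe_set_eq]
  exact Nat.card_congr (e.mapNeighborSet v)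

lemma exists_adj_of_deg_ne_zero [Finite V] {G : SimpleGraph V} {v : V} (h : deg G v ≠ 0) :
    ∃ u, G.Adj v u :=
  Set.nonempty_of_ncard_ne_zero h

lemma adj_or_adj_of_deg_compl_le_one [Finite V] {G : SimpleGraph V} {v a b : V}
    (h : deg Gᶜ v ≤ 1) (ha : a ≠ v) (hb : b ≠ v) (hab : a ≠ b) : G.Adj v a ∨ G.Adj v b := by
  by_contra! hna
  have : 1 < deg Gᶜ v := (Set.one_lt_ncard_iff (Set.toFinite _)).mpr
    ⟨a, b, (G.compl_adj v a).mpr ⟨ha.symm, hna.1⟩, (G.compl_adj v b).mpr ⟨hb.symm, hna.2⟩,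
      hab⟩
  omega

lemma adj_of_deg_compl_eq_one [Finite V] {G : SimpleGraph V} {x y z : V}
    (hx : deg Gᶜ x = 1) (hxy : Gᶜ.Adj x y) (hzx : z ≠ x) (hzy : z ≠ y) : G.Adj x z := by
  obtain ⟨w, hw⟩ := Set.ncard_eq_one.mp hx
  have hy : y ∈ Gᶜ.neighborSet x := hxy
  rw [hw, Set.mem_singleton_iff] at hy
  by_contra hxz
  have : z = w := by
    rw [← Set.mem_singleton_iff, ← hw, mem_neighborSet, compl_adj]
    exact ⟨hzx.symm, hxz⟩
  exact hzy (this.trans hy.symm)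

end Degree

section RomanDomination

variable {V : Type*} [Fintype V] (G : SimpleGraph V)

lemma romanDom_le_sum {f : V → ℕ} (hf : IsRDF G f) : romanDom G ≤ ∑ v, f v :=
  Nat.sInf_le ⟨f, hf, rfl⟩

lemma exists_isRDF_sum_eq_romanDom : ∃ f : V → ℕ, IsRDF G f ∧ ∑ v, f v = romanDom G :=
  Nat.sInf_mem (s := {k | ∃ f : V → ℕ, IsRDF G f ∧ ∑ v, f v = k})
    ⟨_, fun _ => 1, ⟨fun _ => one_le_two, fun _ h => absurd h one_ne_zero⟩, rfl⟩

/-- Weight `2` on `v`, `1` on its non-neighbours and `0` on its neighbours. -/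
lemma romanDom_le_two_add_deg_compl (v : V) : romanDom G ≤ 2 + deg Gᶜ v := by
  classical
  let f : V → ℕ := fun u => (if u = v then 2 else 0) + if Gᶜ.Adj v u then 1 else 0
  have hf : IsRDF G f := by
    refine ⟨fun u => ?_, fun u hu => ⟨v, ?_, by simp [f]⟩⟩
    · by_cases huv : u = v
      · simp [f, huv]
      · simp only [f, huv, if_false, zero_add]
        split_ifs <;> omega
    · have huv : u ≠ v := by rintro rfl; simp [f] at hu
      have : ¬Gᶜ.Adj v u := by simp_all [f]
      rw [compl_adj, not_and, not_not] at this
      exact (this huv.symm).symm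
  calc romanDom G ≤ ∑ u, f u := romanDom_le_sum G hf
    _ = 2 + deg Gᶜ v := by
      rw [Finset.sum_add_distrib, Finset.sum_ite_eq', Finset.sum_boole, deg_eq_degree,
        ← card_neighborFinset_eq_degree, neighborFinset_eq_filter]
      simp

lemma deg_compl_ne_zero_of_romanDom_eq_three (hγ : romanDom G = 3) (v : V) :
    deg Gᶜ v ≠ 0 := by
  have := romanDom_le_two_add_deg_compl G v
  omega

/-- A minimum Roman dominating function of weight at most `3` on at least four vertices has a
vertex `v` of weight `2`, every other vertex has weight at most `1`, and so every non-neighbour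
of `v` has positive weight. -/
lemma exists_deg_compl_le_one_of_romanDom_le_three (hn : 4 ≤ Fintype.card V)
    (h3 : romanDom G ≤ 3) : ∃ v, deg Gᶜ v ≤ 1 := by
  classical
  obtain ⟨f, ⟨-, hf0⟩, hsum⟩ := exists_isRDF_sum_eq_romanDom G
  obtain ⟨v, hv⟩ : ∃ v, f v = 2 := by
    by_contra! hno
    have hpos : ∀ u ∈ univ, 1 ≤ f u := fun u _ => by
      by_contra! h0
      obtain ⟨w, -, hw⟩ := hf0 u (by omega)
      exact hno w hw
    have : ∑ _u : V, 1 ≤ ∑ u, f u := Finset.sum_le_sum hpos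
    simp only [sum_const, card_univ, smul_eq_mul, mul_one] at this
    omega
  have hle1 : ∀ u ≠ v, f u ≤ 1 := fun u hu => by
    have := Finset.add_le_sum (f := f) (fun _ _ => Nat.zero_le _) (mem_univ v) (mem_univ u)
      hu.symm
    omega
  refine ⟨v, ?_⟩
  have hpoint :
      ∀ u ∈ univ, (if u = v then 2 else 0) + (if Gᶜ.Adj v u then 1 else 0) ≤ f u := by
    intro u _
    by_cases huv : u = v
    · subst huv; simp [hv]
    · by_cases hadj : Gᶜ.Adj v u
      · simp only [huv, hadj, if_true, if_false, zero_add]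
        by_contra! h0
        obtain ⟨w, hwu, hw⟩ := hf0 u (by omega)
        have hwv : w = v := by_contra fun hwv => by have := hle1 w hwv; omega
        exact ((compl_adj G v u).mp hadj).2 (hwv ▸ hwu).symm
      · simp [huv, hadj]
  have := Finset.sum_le_sum hpoint
  rw [Finset.sum_add_distrib, Finset.sum_ite_eq', Finset.sum_boole, hsum, if_pos (mem_univ v),
    ← neighborFinset_eq_filter, card_neighborFinset_eq_degree, Nat.cast_id,
    ← deg_eq_degree] at this
  omega

lemma maxDeg_eq_card_sub_two (hn : 4 ≤ Fintype.card V) (hγ : romanDom G = 3) :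
    maxDeg G = Fintype.card V - 2 := by
  refine IsGreatest.csSup_eq ⟨?_, ?_⟩
  · obtain ⟨v, hv⟩ := exists_deg_compl_le_one_of_romanDom_le_three G hn hγ.le
    have := deg_compl_ne_zero_of_romanDom_eq_three G hγ v
    have := deg_add_deg_compl G v
    exact ⟨v, by omega⟩
  · rintro _ ⟨v, rfl⟩
    have := deg_compl_ne_zero_of_romanDom_eq_three G hγ v
    have := deg_add_deg_compl G v
    omega

end RomanDomination

section EdgeCover

variable {V : Type*} {G : SimpleGraph V}

variable (G) in
def IsEdgeCover (T : Finset V) (B : Set (Sym2 V)) : Prop :=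
  B ⊆ G.edgeSet ∧ ∀ v ∈ T, ∃ u, s(v, u) ∈ B

lemma IsEdgeCover.mono {T T' : Finset V} {B : Set (Sym2 V)} (h : IsEdgeCover G T B)
    (hT : T' ⊆ T) : IsEdgeCover G T' B :=
  ⟨h.1, fun v hv => h.2 v (hT hv)⟩

lemma IsEdgeCover.union [DecidableEq V] {T T' : Finset V} {B B' : Set (Sym2 V)}
    (h : IsEdgeCover G T B) (h' : IsEdgeCover G T' B') : IsEdgeCover G (T ∪ T') (B ∪ B') := by
  refine ⟨Set.union_subset h.1 h'.1, fun v hv => ?_⟩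
  rcases Finset.mem_union.mp hv with hv | hv
  · exact (h.2 v hv).imp fun _ => Or.inl
  · exact (h'.2 v hv).imp fun _ => Or.inr

lemma isEdgeCover_pair [DecidableEq V] {x y : V} (h : G.Adj x y) :
    IsEdgeCover G {x, y} {s(x, y)} := by
  refine ⟨Set.singleton_subset_iff.mpr h, fun v hv => ?_⟩
  rcases Finset.mem_insert.mp hv with rfl | hv
  · exact ⟨y, rfl⟩
  · rw [Finset.mem_singleton.mp hv]
    exact ⟨x, Sym2.eq_swap⟩

lemma exists_isEdgeCover_ncard_le (T : Finset V) (h : ∀ v ∈ T, ∃ u, G.Adj v u) :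
    ∃ B, IsEdgeCover G T B ∧ B.ncard ≤ T.card := by
  choose! g hg using h
  refine ⟨(fun v => s(v, g v)) '' ↑T, ⟨?_, fun v hv => ⟨g v, v, hv, rfl⟩⟩, ?_⟩
  · rintro _ ⟨v, hv, rfl⟩
    exact hg v hv
  · exact (Set.ncard_image_le T.finite_toSet).trans (Set.ncard_coe_finset T).le

lemma IsEdgeCover.card_le_two_mul_ncard [Finite V] {T : Finset V} {B : Set (Sym2 V)}
    (h : IsEdgeCover G T B) : T.card ≤ 2 * B.ncard := by
  classical
  choose! g hg using h.2
  have hfin : B.Finite := G.edgeSet.toFinite.subset h.1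
  rw [Set.ncard_eq_toFinset_card B hfin]
  refine Finset.card_le_mul_card_image_of_maps_to (f := fun v => s(v, g v))
    (fun v hv => by simpa using hg v hv) 2 fun e _ => ?_
  by_contra! h3
  obtain ⟨p, hp, q, hq, r, hr, hpq, hpr, hqr⟩ := Finset.two_lt_card.mp h3
  simp only [Finset.mem_filter] at hp hq hr
  have he : e = s(p, q) :=
    (Sym2.mem_and_mem_iff hpq).mp ⟨hp.2 ▸ Sym2.mem_mk_left _ _, hq.2 ▸ Sym2.mem_mk_left _ _⟩
  have hre : r ∈ s(p, q) := he ▸ hr.2 ▸ Sym2.mem_mk_left _ _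
  rcases Sym2.mem_iff.mp hre with rfl | rfl
  · exact hpr rfl
  · exact hqr rfl

end EdgeCover

section RomanBondage

variable {V : Type*} [Fintype V] {G : SimpleGraph V}

variable (G) in
/-- The vertices of degree `n - 2`, i.e. with exactly one non-neighbour. -/
noncomputable def nearlyUniversal : Finset V := {v | deg Gᶜ v = 1}

lemma mem_nearlyUniversal {v : V} : v ∈ nearlyUniversal G ↔ deg Gᶜ v = 1 := by
  simp [nearlyUniversal]

lemma exists_adj_of_mem_nearlyUniversal (hn : 3 ≤ Fintype.card V) {v : V}
    (hv : v ∈ nearlyUniversal G) : ∃ u, G.Adj v u := by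
  have := deg_add_deg_compl G v
  rw [mem_nearlyUniversal.mp hv] at this
  exact exists_adj_of_deg_ne_zero (by omega)

/-- Deleting edges only adds non-neighbours, and a vertex keeps its non-neighbours exactly when
no deleted edge is incident to it. -/
lemma three_lt_romanDom_deleteEdges_iff (hn : 4 ≤ Fintype.card V) (hγ : romanDom G = 3)
    {B : Set (Sym2 V)} (hB : B ⊆ G.edgeSet) :
    3 < romanDom (G.deleteEdges B) ↔ IsEdgeCover G (nearlyUniversal G) B := by
  have hle : (G.deleteEdges B)ᶜ ≥ Gᶜ := compl_le_compl (deleteEdges_le B)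
  constructor
  · refine fun hgt => ⟨hB, fun v hv => ?_⟩
    by_contra! hno
    have heq : (G.deleteEdges B)ᶜ.neighborSet v = Gᶜ.neighborSet v := by
      ext u
      simp [hno u]
    have := romanDom_le_two_add_deg_compl (G.deleteEdges B) v
    rw [deg, heq, ← deg, mem_nearlyUniversal.mp hv] at this
    omega
  · rintro ⟨-, hcov⟩
    by_contra! h3
    obtain ⟨v, hv⟩ := exists_deg_compl_le_one_of_romanDom_le_three _ hn h3
    have hne := deg_compl_ne_zero_of_romanDom_eq_three G hγ v
    have hmono := deg_mono hle v
    obtain ⟨u, hu⟩ := hcov v (mem_nearlyUniversal.mpr (by omega))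
    have hadj : G.Adj v u := hB hu
    have := deg_lt_deg hle (v := v) (u := u) (by simp [hadj.ne, hu]) (by simp [hadj])
    omega

lemma romanBondage_le_ncard (hn : 4 ≤ Fintype.card V) (hγ : romanDom G = 3)
    {B : Set (Sym2 V)} (hB : IsEdgeCover G (nearlyUniversal G) B) : romanBondage G ≤ B.ncard :=
  Nat.sInf_le ⟨B, hB.1, hγ ▸ (three_lt_romanDom_deleteEdges_iff hn hγ hB.1).mpr hB, rfl⟩

lemma exists_isEdgeCover_ncard_eq_romanBondage (hn : 4 ≤ Fintype.card V)
    (hγ : romanDom G = 3) :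
    ∃ B, IsEdgeCover G (nearlyUniversal G) B ∧ B.ncard = romanBondage G := by
  obtain ⟨B, hB, -⟩ := exists_isEdgeCover_ncard_le (nearlyUniversal G)
    fun v hv => exists_adj_of_mem_nearlyUniversal (by omega) hv
  obtain ⟨B', hB'E, hgt, hcard⟩ := Nat.sInf_mem (s := {k | ∃ B : Set (Sym2 V),
    B ⊆ G.edgeSet ∧ romanDom (G.deleteEdges B) > romanDom G ∧ B.ncard = k})
    ⟨_, B, hB.1, hγ ▸ (three_lt_romanDom_deleteEdges_iff hn hγ hB.1).mpr hB, rfl⟩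
  exact ⟨B', (three_lt_romanDom_deleteEdges_iff hn hγ hB'E).mp (hγ ▸ hgt), hcard⟩

end RomanBondage

section UpperBound

variable {V : Type*} {G : SimpleGraph V}

lemma exists_adj_of_three_le_card [Finite V] {T : Finset V} (hT3 : 3 ≤ T.card)
    (hT : ∀ v ∈ T, deg Gᶜ v ≤ 1) : ∃ x ∈ T, ∃ y ∈ T, G.Adj x y := by
  obtain ⟨a, ha, b, hb, c, hc, hab, hac, hbc⟩ := Finset.two_lt_card.mp hT3
  rcases adj_or_adj_of_deg_compl_le_one (hT a ha) hab.symm hac.symm hbc with h | h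
  · exact ⟨a, ha, b, hb, h⟩
  · exact ⟨a, ha, c, hc, h⟩

lemma exists_isEdgeCover_ncard_le_two_of_card_eq_four [Finite V] [DecidableEq V]
    {T : Finset V} (hT4 : T.card = 4) (hT : ∀ v ∈ T, deg Gᶜ v ≤ 1) :
    ∃ B, IsEdgeCover G T B ∧ B.ncard ≤ 2 := by
  obtain ⟨a, ha⟩ := Finset.card_pos.mp (by omega : 0 < T.card)
  obtain ⟨b, c, d, hbc, hbd, hcd, hbcd⟩ :=
    Finset.card_eq_three.mp (by rw [Finset.card_erase_of_mem ha, hT4] : (T.erase a).card = 3)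
  have haT : a ∉ T.erase a := Finset.notMem_erase a T
  rw [hbcd] at haT
  simp only [Finset.mem_insert, Finset.mem_singleton, not_or] at haT
  obtain ⟨hab, hac, had⟩ := haT
  have hTeq : T = {a, b, c, d} := by rw [← Finset.insert_erase ha, hbcd]
  subst hTeq
  have key : ∀ {x y z w : V}, G.Adj x y → G.Adj z w →
      ({a, b, c, d} : Finset V) ⊆ {x, y} ∪ {z, w} →
      ∃ B, IsEdgeCover G {a, b, c, d} B ∧ B.ncard ≤ 2 := fun hxy hzw hsub =>
    ⟨_, ((isEdgeCover_pair hxy).union (isEdgeCover_pair hzw)).mono hsub,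
      (Set.ncard_union_le _ _).trans (by simp)⟩
  have hor : ∀ {v x y : V}, v ∈ ({a, b, c, d} : Finset V) → x ≠ v → y ≠ v → x ≠ y →
      G.Adj v x ∨ G.Adj v y := fun hv => adj_or_adj_of_deg_compl_le_one (hT _ hv)
  by_cases hab' : G.Adj a b
  · by_cases hcd' : G.Adj c d
    · exact key hab' hcd' (by intro v; simp; tauto)
    · have hca := (hor (by simp) hac hcd.symm had).resolve_right hcd'
      have hdb := (hor (by simp) hbd hcd hbc).resolve_right fun h => hcd' h.symm
      exact key hca hdb (by intro v; simp; tauto)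
  · have hac' := (hor (by simp) (Ne.symm hab) (Ne.symm hac) hbc).resolve_left hab'
    have hbd' := (hor (by simp) hab (Ne.symm hbd) had).resolve_left fun h => hab' h.symm
    exact key hac' hbd' (by intro v; simp; tauto)

/-- Greedily take edges inside `T`; only a leftover set of size two could fail to be covered by
one edge, and the case `|T| = 4` is treated separately to avoid it. -/
lemma exists_isEdgeCover_two_mul_ncard_le [Finite V] [DecidableEq V] (T : Finset V)
    (hT3 : 3 ≤ T.card) (hT : ∀ v ∈ T, deg Gᶜ v ≤ 1) (hadj : ∀ v ∈ T, ∃ u, G.Adj v u) :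
    ∃ B, IsEdgeCover G T B ∧ 2 * B.ncard ≤ T.card + 1 := by
  induction T using Finset.strongInduction with
  | H T ih =>
  by_cases h4 : T.card = 4
  · obtain ⟨B, hB, hcard⟩ := exists_isEdgeCover_ncard_le_two_of_card_eq_four h4 hT
    exact ⟨B, hB, by omega⟩
  obtain ⟨x, hx, y, hy, hxy⟩ := exists_adj_of_three_le_card hT3 hT
  set T' := (T.erase x).erase y
  have hT'T : ∀ v ∈ T', v ∈ T := fun v hv => Finset.mem_of_mem_erase (Finset.mem_of_mem_erase hv)
  have hcard : T'.card + 2 = T.card := by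
    rw [Finset.card_erase_of_mem (Finset.mem_erase.mpr ⟨hxy.ne.symm, hy⟩),
      Finset.card_erase_of_mem hx]
    omega
  obtain ⟨B', hB', hB'card⟩ : ∃ B', IsEdgeCover G T' B' ∧ 2 * B'.ncard ≤ T'.card + 1 := by
    rcases (by omega : T'.card = 1 ∨ 3 ≤ T'.card) with h1 | h3
    · obtain ⟨B', hB', hc⟩ := exists_isEdgeCover_ncard_le T' fun v hv => hadj v (hT'T v hv)
      exact ⟨B', hB', by omega⟩
    · exact ih T' ⟨fun v hv => hT'T v hv, fun h => by have := Finset.card_le_card h; omega⟩ h3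
        (fun v hv => hT v (hT'T v hv)) (fun v hv => hadj v (hT'T v hv))
  refine ⟨{s(x, y)} ∪ B', ((isEdgeCover_pair hxy).union hB').mono fun v hv => ?_, ?_⟩
  · simp only [T', Finset.mem_union, Finset.mem_insert, Finset.mem_singleton, Finset.mem_erase]
    tauto
  · have := Set.ncard_union_le {s(x, y)} B'
    rw [Set.ncard_singleton] at this
    omega

lemma even_card_nearlyUniversal [Fintype V] (h : ∀ v, deg Gᶜ v ≤ 2) :
    Even (nearlyUniversal G).card := by
  classical
  convert Gᶜ.even_card_odd_degree_vertices using 2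
  ext v
  rw [mem_nearlyUniversal, Finset.mem_filter, ← deg_eq_degree]
  obtain hd | hd | hd : deg Gᶜ v = 0 ∨ deg Gᶜ v = 1 ∨ deg Gᶜ v = 2 := by have := h v; omega
  all_goals simp only [hd, mem_univ, true_and]; decide

lemma romanBondage_le_card_sub_three [Fintype V] (hn : 5 ≤ Fintype.card V)
    (hγ : romanDom G = 3) : romanBondage G ≤ Fintype.card V - 3 := by
  classical
  set S := nearlyUniversal G
  have hS : S.card ≤ Fintype.card V := card_le_univ S
  have hadj : ∀ v ∈ S, ∃ u, G.Adj v u := fun v hv => exists_adj_of_mem_nearlyUniversal (by omega) hv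
  rcases le_or_gt S.card (Fintype.card V - 3) with hle | hlt
  · obtain ⟨B, hB, hc⟩ := exists_isEdgeCover_ncard_le S hadj
    exact (romanBondage_le_ncard (by omega) hγ hB).trans (hc.trans hle)
  · have hodd : ¬(Fintype.card V = 5 ∧ S.card = 5) := by
      rintro ⟨h5, hS5⟩
      have hSuniv : S = univ := eq_univ_of_card S (by omega)
      have := even_card_nearlyUniversal (G := G) fun v =>
        (mem_nearlyUniversal.mp (show v ∈ S from hSuniv ▸ mem_univ v)).trans_le one_le_two
      rw [hS5] at this
      exact absurd this (by decide)
    obtain ⟨B, hB, hc⟩ := exists_isEdgeCover_two_mul_ncard_le S (by omega)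
      (fun v hv => (mem_nearlyUniversal.mp hv).le) hadj
    have := romanBondage_le_ncard (by omega) hγ hB
    omega

end UpperBound

section FourVertices

variable {V : Type*} {G : SimpleGraph V}

lemma two_le_deg_of_compl_adj [Finite V] {x y z : V} (hx : deg Gᶜ x = 1) (hy : deg Gᶜ y = 1)
    (hxy : Gᶜ.Adj x y) (hzx : z ≠ x) (hzy : z ≠ y) : 2 ≤ deg G z := by
  have hsub : ({x, y} : Set V) ⊆ G.neighborSet z := by
    rintro w (rfl | rfl)
    · exact (adj_of_deg_compl_eq_one hx hxy hzx hzy).symm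
    · exact (adj_of_deg_compl_eq_one hy hxy.symm hzy hzx).symm
  exact Set.ncard_pair (G.compl_adj x y |>.mp hxy).1 ▸ Set.ncard_le_ncard hsub

/-- Every vertex has one or two non-neighbours, so `nearlyUniversal G` is the set of odd-degree
vertices of `Gᶜ` and has two or four elements; two of them could be covered by a single edge. -/
lemma forall_deg_compl_eq_one_of_romanBondage_eq_two [Fintype V] (hconn : G.Connected)
    (hcard : Fintype.card V = 4) (hγ : romanDom G = 3) (hb : romanBondage G = 2) :
    ∀ v, deg Gᶜ v = 1 := by
  classical
  have : Nontrivial V := Fintype.one_lt_card_iff_nontrivial.mp (by omega)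
  have hne : ∀ v, deg Gᶜ v ≠ 0 := deg_compl_ne_zero_of_romanDom_eq_three G hγ
  have hdeg2 : ∀ v, deg Gᶜ v ≤ 2 := fun v => by
    obtain ⟨u, hu⟩ := hconn.preconnected.exists_adj_of_nontrivial v
    have : deg G v ≠ 0 := Set.ncard_ne_zero_of_mem hu
    have := deg_add_deg_compl G v
    omega
  have hSpos : (nearlyUniversal G).Nonempty := by
    obtain ⟨v, hv⟩ := exists_deg_compl_le_one_of_romanDom_le_three G (by omega) hγ.le
    exact ⟨v, mem_nearlyUniversal.mpr (by have := hne v; omega)⟩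
  have hS2 : (nearlyUniversal G).card ≠ 2 := by
    intro hS2
    obtain ⟨x, y, hxy, hSxy⟩ := Finset.card_eq_two.mp hS2
    have hx : deg Gᶜ x = 1 := mem_nearlyUniversal.mp (by simp [hSxy])
    have hy : deg Gᶜ y = 1 := mem_nearlyUniversal.mp (by simp [hSxy])
    by_cases hadj : G.Adj x y
    · have := hb ▸ romanBondage_le_ncard (by omega) hγ ((isEdgeCover_pair hadj).mono hSxy.le)
      simp at this
    · obtain ⟨z, hz⟩ : ∃ z, z ∉ nearlyUniversal G := by
        by_contra! hall
        have := eq_univ_of_forall hall ▸ hS2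
        simp [hcard] at this
      have hzx : z ≠ x := by rintro rfl; simp [hSxy] at hz
      have hzy : z ≠ y := by rintro rfl; simp [hSxy] at hz
      have := two_le_deg_of_compl_adj hx hy ((G.compl_adj x y).mpr ⟨hxy, hadj⟩) hzx hzy
      have := deg_add_deg_compl G z
      exact hz (mem_nearlyUniversal.mpr (by have := hne z; omega))
  have hS4 : (nearlyUniversal G).card = 4 := by
    obtain ⟨k, hk⟩ := even_card_nearlyUniversal hdeg2
    have := card_le_univ (nearlyUniversal G)
    have := hSpos.card_pos
    omega
  intro v
  rw [← mem_nearlyUniversal, eq_univ_of_card _ (hS4.trans hcard.symm)]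
  exact mem_univ v

/-- `Gᶜ` is a perfect matching `v ↦ m v`, and `v₀, a, m v₀, m a` run around a 4-cycle of `G`. -/
lemma nonempty_iso_cycleGraph_four [Fintype V] (hcard : Fintype.card V = 4)
    (h : ∀ v, deg Gᶜ v = 1) : Nonempty (G ≃g cycleGraph 4) := by
  classical
  choose m hm using fun v => Set.ncard_eq_one.mp (h v)
  have hcompl : ∀ u v, Gᶜ.Adj u v ↔ v = m u := fun u v => by
    rw [← mem_neighborSet, hm u, Set.mem_singleton_iff]
  have hadj : ∀ u v, G.Adj u v ↔ u ≠ v ∧ v ≠ m u := fun u v => by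
    simp only [ne_eq, ← hcompl, compl_adj]
    have : G.Adj u v → u ≠ v := Adj.ne
    tauto
  have hmm : ∀ v, m (m v) = v := fun v =>
    ((hcompl _ _).mp ((hcompl v (m v)).mpr rfl).symm).symm
  have hmne : ∀ v, m v ≠ v := fun v => (Gᶜ.ne_of_adj ((hcompl v (m v)).mpr rfl)).symm
  obtain ⟨v₀⟩ : Nonempty V := Fintype.card_pos_iff.mp (by omega)
  obtain ⟨a, ha⟩ : ∃ a, a ∉ ({v₀, m v₀} : Finset V) := by
    by_contra! hall
    have := Finset.card_le_card (fun x _ => hall x : univ ⊆ {v₀, m v₀})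
    have := Finset.card_le_two (a := v₀) (b := m v₀)
    simp only [card_univ] at *
    omega
  simp only [Finset.mem_insert, Finset.mem_singleton, not_or] at ha
  obtain ⟨hav, ham⟩ := ha
  have hmav : m a ≠ v₀ := fun h' => ham (by rw [← h', hmm])
  have hmam : m a ≠ m v₀ := fun h' => hav (by rw [← hmm a, h', hmm])
  have hmv := hmne v₀
  have hma := hmne a
  let f : Fin 4 → V := ![v₀, a, m v₀, m a]
  have hf : Function.Injective f := by
    intro i j hij
    fin_cases i <;> fin_cases j <;> simp_all [f, Ne.symm]
  have hfm : ∀ i, m (f i) = f (i + 2) := by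
    intro i
    fin_cases i <;> simp [f, hmm]
  have hbij := (Fintype.bijective_iff_injective_and_card f).mpr ⟨hf, by simp [hcard]⟩
  refine ⟨(RelIso.mk (Equiv.ofBijective f hbij) fun {i j} => ?_ : cycleGraph 4 ≃g G).symm⟩
  rw [Equiv.ofBijective_apply, Equiv.ofBijective_apply, hadj, hfm, hf.ne_iff, hf.ne_iff]
  revert i j
  decide

lemma romanBondage_eq_two_of_iso_cycleGraph_four [Fintype V] (hγ : romanDom G = 3)
    (e : G ≃g cycleGraph 4) : romanBondage G = 2 := by
  classical
  have hcard : Fintype.card V = 4 := by simpa using e.card_eq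
  have hS : nearlyUniversal G = univ := eq_univ_of_forall fun v => by
    have h2 : deg G v = 2 := by
      rw [deg_iso e, deg_eq_degree]
      exact cycleGraph_degree_three_le
    have := deg_add_deg_compl G v
    exact mem_nearlyUniversal.mpr (by omega)
  apply le_antisymm
  · have hB : IsEdgeCover G (nearlyUniversal G)
        ({s(e.symm 0, e.symm 1)} ∪ {s(e.symm 2, e.symm 3)}) := by
      refine ((isEdgeCover_pair (e.symm.map_adj_iff.mpr (by decide))).union
        (isEdgeCover_pair (e.symm.map_adj_iff.mpr (by decide)))).mono fun v _ => ?_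
      rw [← e.symm_apply_apply v]
      generalize e v = i
      fin_cases i <;> simp
    exact (romanBondage_le_ncard (by omega) hγ hB).trans ((Set.ncard_union_le _ _).trans (by simp))
  · obtain ⟨B, hB, hBcard⟩ := exists_isEdgeCover_ncard_eq_romanBondage (by omega) hγ
    have := hB.card_le_two_mul_ncard
    rw [hS, card_univ, hcard] at this
    omega

end FourVertices

theorem stmt19 {V : Type*} [Fintype V] (G : SimpleGraph V)
    (hconn : G.Connected) (hn : 4 ≤ Fintype.card V)
    (hγ : romanDom G = 3) :
    (romanBondage G = maxDeg G ∧ maxDeg G = Fintype.card V - 2) ↔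
      Nonempty (G ≃g SimpleGraph.cycleGraph 4) := by
  rw [maxDeg_eq_card_sub_two G hn hγ, and_iff_left rfl]
  constructor
  · intro hb
    have hcard : Fintype.card V = 4 := by
      by_contra hne
      have := romanBondage_le_card_sub_three (G := G) (by omega) hγ
      omega
    exact nonempty_iso_cycleGraph_four hcard
      (forall_deg_compl_eq_one_of_romanBondage_eq_two hconn hcard hγ (by omega))
  · rintro ⟨e⟩
    have hcard : Fintype.card V = 4 := by simpa using e.card_eq
    rw [romanBondage_eq_two_of_iso_cycleGraph_four hγ e, hcard]
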